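/- arXiv:1907.10378 — 2 statements merged into one kernel-verified Lean document; each statement's English description precedes it below -/
import Mathlib

section
/- Let G be a small groupoid and let β be an extended inner automorphism of G in the category Grpd of small groupoids and functors. Then β is trivial: for every functor f : G → H, the automorphism β_f : H → H is the identity functor. Consequently, there are no non-trivial extended inner automorphisms in Grpd. -/
/-!
Adjoin to `H` a new object `twin` with an isomorphism `link` to a given object `b`. Naturality of `β`
along the inclusion `H ⥤ WithTwin H b` shows that `β_{f ⋙ incl}` maps objects of `H` to objects of
`H`; being bijective on objects, it fixes `twin`. Each `w : a ⟶ b` gives a retraction of the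
inclusion sending `twin` to `a` and the link to `w`, and naturality along it shows that `β_f`
fixes `a` and that `β_f w = w ≫ m`, where `m : b ⟶ b` is the image of the link under `β_{f ⋙ incl}`
and does not depend on `w`. Taking `w = 𝟙 b` gives `m = 𝟙 b`.
-/

open CategoryTheory

universe u

/-- An extended inner automorphism of a small groupoid `G` in the category `Grpd` of
small groupoids and homomorphisms (functors): a family of automorphisms
`β_f : H ⥤ H`, one for each functor `f : G ⥤ H`, such that
`β_{g ∘ f} ∘ g = g ∘ β_f` for all functors `f : G ⥤ H` and `g : H ⥤ K`. -/
structure ExtInnerGrpd (G : Type u) [Groupoid.{u} G] : Type (u + 1) where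
  app : ∀ (H : Type u) [Groupoid.{u} H], (G ⥤ H) → (H ⥤ H)
  iso : ∀ (H : Type u) [Groupoid.{u} H] (f : G ⥤ H),
    ∃ ginv : H ⥤ H, app H f ⋙ ginv = 𝟭 H ∧ ginv ⋙ app H f = 𝟭 H
  natural : ∀ (H K : Type u) [Groupoid.{u} H] [Groupoid.{u} K] (f : G ⥤ H) (g : H ⥤ K),
    app H f ⋙ g = g ⋙ app K (f ⋙ g)

-- Reducible (unlike `Option.elim`), so that hom-types of `WithTwin H b` unfold to those of `H`.
abbrev twinObj {H : Type*} (b : H) : Option H → H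
  | none => b
  | some x => x

/-- `H` with one new object `none` lying over `b`: the morphisms are those of `H` between the
underlying objects. -/
abbrev WithTwin (H : Type*) [Category H] (b : H) :=
  InducedCategory H (twinObj b)

namespace WithTwin

variable {H : Type*} [Category H] {b : H}

def twin : WithTwin H b := none

def incl : H ⥤ WithTwin H b where
  obj := some
  map m := InducedCategory.homMk m

lemma incl_obj_ne_twin (x : H) : incl.obj x ≠ (twin : WithTwin H b) :=
  Option.some_ne_none x

def link : (twin : WithTwin H b) ⟶ incl.obj b :=
  InducedCategory.homMk (𝟙 b)

def retract {a : H} (e : a ≅ b) : WithTwin H b ⥤ H :=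
  (inducedFunctor _).copyObj (twinObj a) fun
    | none => e.symm
    | some x => Iso.refl x

variable {a : H} (e : a ≅ b)

lemma incl_comp_retract : incl ⋙ retract e = 𝟭 H :=
  Functor.hext (fun _ => rfl) fun _ _ m => heq_of_eq <| by
    simp [retract, Functor.copyObj, incl]

lemma retract_map_of_twin_incl (v : (twin : WithTwin H b) ⟶ incl.obj b) :
    (retract e).map v = e.hom ≫ v.hom := by
  simp [retract, Functor.copyObj, twin, incl]

lemma retract_map_link : (retract e).map link = e.hom := by
  rw [retract_map_of_twin_incl]
  exact Category.comp_id e.hom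

end WithTwin

theorem CategoryTheory.Functor.eq_id_of_map_heq_comp {C : Type*} [Category C] (F : C ⥤ C)
    (hobj : ∀ x, F.obj x = x)
    (hmap : ∀ b : C, ∃ m : b ⟶ b, ∀ {a : C} (w : a ⟶ b), F.map w ≍ w ≫ m) :
    F = 𝟭 C := by
  refine Functor.hext hobj fun a b w => ?_
  obtain ⟨m, hm⟩ := hmap b
  have hm_id : m = 𝟙 b := by
    have h := hm (𝟙 b)
    rw [F.map_id, Category.id_comp] at h
    exact eq_of_heq (h.symm.trans (congr_arg_heq (fun x => 𝟙 x) (hobj b)))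
  simpa [hm_id] using hm w

namespace ExtInnerGrpd

open WithTwin

variable {G : Type u} [Groupoid.{u} G] (β : ExtInnerGrpd G) {H : Type u} [Groupoid.{u} H]
  (f : G ⥤ H)

theorem app_obj_surjective : Function.Surjective (β.app H f).obj := by
  obtain ⟨ginv, -, h⟩ := β.iso H f
  exact fun y => ⟨ginv.obj y, Functor.congr_obj h y⟩

theorem app_incl_obj_incl {b : H} (x : H) :
    (β.app (WithTwin H b) (f ⋙ incl)).obj (incl.obj x) = incl.obj ((β.app H f).obj x) :=
  (Functor.congr_obj (β.natural _ _ f incl) x).symm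

theorem app_incl_comp_retract {a b : H} (w : a ⟶ b) :
    β.app (WithTwin H b) (f ⋙ incl) ⋙ retract (asIso w) = retract (asIso w) ⋙ β.app H f := by
  simpa only [Functor.assoc, incl_comp_retract, Functor.comp_id]
    using β.natural _ _ (f ⋙ incl) (retract (asIso w))

theorem app_incl_obj_twin (b : H) : (β.app (WithTwin H b) (f ⋙ incl)).obj twin = twin := by
  obtain ⟨X, hX⟩ := β.app_obj_surjective (f ⋙ incl) (twin : WithTwin H b)
  rcases X with _ | x
  · exact hX
  · exact absurd ((β.app_incl_obj_incl f x).symm.trans hX) (incl_obj_ne_twin _)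

theorem app_obj_eq_self (x : H) : (β.app H f).obj x = x :=
  calc (β.app H f).obj x
      = (retract (asIso (𝟙 x))).obj ((β.app (WithTwin H x) (f ⋙ incl)).obj twin) :=
        (Functor.congr_obj (β.app_incl_comp_retract f (𝟙 x)) twin).symm
    _ = x := by rw [β.app_incl_obj_twin]; rfl

theorem exists_app_map_heq_comp (b : H) :
    ∃ m : b ⟶ b, ∀ {a : H} (w : a ⟶ b), (β.app H f).map w ≍ w ≫ m := by
  set βK := β.app (WithTwin H b) (f ⋙ incl)
  have htwin : βK.obj twin = twin := β.app_incl_obj_twin f b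
  have hb : βK.obj (incl.obj b) = incl.obj b := by rw [β.app_incl_obj_incl, app_obj_eq_self]
  refine ⟨(eqToHom htwin.symm ≫ βK.map link ≫ eqToHom hb).hom, fun w => ?_⟩
  have h := Functor.hcongr_hom (β.app_incl_comp_retract f w) link
  simp only [Functor.comp_map, retract_map_link, asIso_hom] at h
  refine HEq.trans ?_ (heq_of_eq (retract_map_of_twin_incl (asIso w) _))
  rw [Functor.map_comp, Functor.map_comp, eqToHom_map, eqToHom_map]
  exact h.symm.trans ((comp_eqToHom_heq _ _).symm.trans (eqToHom_comp_heq _ _).symm)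

end ExtInnerGrpd

/-- There are no non-trivial extended inner automorphisms in `Grpd`: every extended
inner automorphism of a small groupoid `G` has all its components equal to the
identity functor. -/
theorem stmt0 (G : Type u) [Groupoid.{u} G] (β : ExtInnerGrpd G)
    (H : Type u) [Groupoid.{u} H] (f : G ⥤ H) :
    β.app H f = 𝟭 H :=
  (β.app H f).eq_id_of_map_heq_comp (β.app_obj_eq_self f) (β.exists_app_map_heq_comp f)
end

section
/- Let a commuting square of functors of small groupoids be given, with top f : G → H and bottom g : K → L bijective on objects, and with left h : G → K and right k : H → L discrete opfibrations (so g∘h = k∘f). Then this square is a pullback square of groupoids. -/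
open CategoryTheory

universe u

lemma sigma_hom_ext {C : Type u} [Groupoid.{u} C] {x : C} (s : Σ z : C, x ⟶ z) {y : C}
    (v : x ⟶ y) : s = ⟨y, v⟩ ↔ ∃ e : s.1 = y, s.2 ≫ eqToHom e = v := by
  obtain ⟨z, u⟩ := s
  constructor
  · intro hyp
    injection hyp with h1 h2
    subst h1
    exact ⟨rfl, by simpa using eq_of_heq h2⟩
  · rintro ⟨h1, h2⟩
    dsimp at h1 h2
    subst h1
    simp only [eqToHom_refl, Category.comp_id] at h2
    subst h2
    rfl

/-- A functor is a discrete opfibration if every morphism out of the image of an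
object has a unique lifting with that object as domain. -/
def IsDiscreteOpfib {H G : Type u} [Groupoid.{u} H] [Groupoid.{u} G] (F : H ⥤ G) : Prop :=
  ∀ (u : H) {v : G} (a : F.obj u ⟶ v),
    ∃! p : Σ w : H, u ⟶ w, (⟨F.obj p.1, F.map p.2⟩ : Σ w : G, (F.obj u ⟶ w)) = ⟨v, a⟩

/-- A commuting square of homomorphisms of small groupoids whose top and bottom edges
`f : G ⥤ H`, `g : K ⥤ L` are bijective on objects and whose left and right edges
`h : G ⥤ K`, `k : H ⥤ L` are discrete opfibrations is necessarily a pullback square: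
for every groupoid `T` and functors `p : T ⥤ H`, `q : T ⥤ K` with `p ⋙ k = q ⋙ g`
there is a unique functor `m : T ⥤ G` with `m ⋙ f = p` and `m ⋙ h = q`. -/
theorem stmt2 {G H K L : Type u}
    [Groupoid.{u} G] [Groupoid.{u} H] [Groupoid.{u} K] [Groupoid.{u} L]
    (f : G ⥤ H) (g : K ⥤ L) (h : G ⥤ K) (k : H ⥤ L)
    (sq : h ⋙ g = f ⋙ k)
    (hf : Function.Bijective f.obj) (hg : Function.Bijective g.obj)
    (hh : IsDiscreteOpfib h) (hk : IsDiscreteOpfib k) :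
    ∀ (T : Type u) [Groupoid.{u} T] (p : T ⥤ H) (q : T ⥤ K),
      p ⋙ k = q ⋙ g → ∃! m : T ⥤ G, m ⋙ f = p ∧ m ⋙ h = q := by
  intro T _ p q comm
  set e := Equiv.ofBijective f.obj hf with he
  set mo : T → G := fun t => e.symm (p.obj t) with hmo
  have hfo : ∀ t : T, f.obj (mo t) = p.obj t := fun t => e.apply_symm_apply _
  have hho : ∀ t : T, h.obj (mo t) = q.obj t := by
    intro t
    apply hg.1
    have h1 := Functor.congr_obj sq (mo t)
    have h2 := Functor.congr_obj comm t
    simp only [Functor.comp_obj] at h1 h2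
    rw [h1, hfo t, h2]
  have lift : ∀ (t t' : T) (a : t ⟶ t'), ∃! pr : Σ w : G, mo t ⟶ w,
      (⟨h.obj pr.1, h.map pr.2⟩ : Σ w : K, (h.obj (mo t) ⟶ w))
        = ⟨q.obj t', eqToHom (hho t) ≫ q.map a⟩ :=
    fun t t' a => hh (mo t) (eqToHom (hho t) ≫ q.map a)
  choose mm mmspec mmuniq using lift
  -- extracted form of mmspec
  have hwq : ∀ t t' (a : t ⟶ t'), h.obj (mm t t' a).1 = q.obj t' := by
    intro t t' a
    exact ((sigma_hom_ext _ _).mp (mmspec t t' a)).choose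
  have hml : ∀ t t' (a : t ⟶ t'),
      h.map (mm t t' a).2 ≫ eqToHom (hwq t t' a) = eqToHom (hho t) ≫ q.map a := by
    intro t t' a
    obtain ⟨e1, e2⟩ := (sigma_hom_ext _ _).mp (mmspec t t' a)
    convert e2
  -- f-image of the lift
  have hfw : ∀ (t t' : T) (a : t ⟶ t'),
      (⟨f.obj (mm t t' a).1, f.map (mm t t' a).2⟩ : Σ w : H, f.obj (mo t) ⟶ w)
        = ⟨p.obj t', eqToHom (hfo t) ≫ p.map a⟩ := by
    intro t t' a
    obtain ⟨z, hz, huniq⟩ := hk (f.obj (mo t)) (k.map (eqToHom (hfo t) ≫ p.map a))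
    have e1 : (⟨p.obj t', eqToHom (hfo t) ≫ p.map a⟩ : Σ w : H, f.obj (mo t) ⟶ w) = z :=
      huniq _ rfl
    have e2 : (⟨f.obj (mm t t' a).1, f.map (mm t t' a).2⟩ : Σ w : H, f.obj (mo t) ⟶ w) = z := by
      apply huniq
      rw [sigma_hom_ext]
      have eobj : k.obj (f.obj (mm t t' a).1) = k.obj (p.obj t') := by
        have h1 := Functor.congr_obj sq (mm t t' a).1
        have h2 := Functor.congr_obj comm t'
        simp only [Functor.comp_obj] at h1 h2
        rw [← h1, hwq t t' a, h2]
      refine ⟨eobj, ?_⟩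
      -- morphism computation
      have oc : ∀ x : G, g.obj (h.obj x) = k.obj (f.obj x) := fun x => Functor.congr_obj sq x
      have mc : ∀ {x y : G} (u : x ⟶ y), k.map (f.map u)
          = eqToHom (oc x).symm ≫ g.map (h.map u) ≫ eqToHom (oc y) := by
        intro x y u
        have hcg := Functor.congr_hom sq u
        simp only [Functor.comp_map] at hcg
        rw [hcg]; simp
      have od : ∀ s : T, k.obj (p.obj s) = g.obj (q.obj s) := fun s => Functor.congr_obj comm s
      have md : ∀ {s s' : T} (u : s ⟶ s'), k.map (p.map u)
          = eqToHom (od s) ≫ g.map (q.map u) ≫ eqToHom (od s').symm := by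
        intro s s' u
        have hcg := Functor.congr_hom comm u
        simp only [Functor.comp_map] at hcg
        rw [hcg]
      have hml' : h.map (mm t t' a).2
          = eqToHom (hho t) ≫ q.map a ≫ eqToHom (hwq t t' a).symm := by
        rw [← Category.assoc, ← hml t t' a]; simp
      rw [mc, hml', k.map_comp, md]
      simp [eqToHom_map]
    rw [e2, ← e1]
  have hwp : ∀ t t' (a : t ⟶ t'), f.obj (mm t t' a).1 = p.obj t' := fun t t' a =>
    ((sigma_hom_ext _ _).mp (hfw t t' a)).choose
  have hwo : ∀ t t' (a : t ⟶ t'), (mm t t' a).1 = mo t' := by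
    intro t t' a
    apply hf.1
    rw [hwp t t' a, hfo t']
  have hmlp : ∀ t t' (a : t ⟶ t'), h.map (mm t t' a).2
      = eqToHom (hho t) ≫ q.map a ≫ eqToHom (hwq t t' a).symm := by
    intro t t' a
    rw [← Category.assoc, ← hml t t' a]; simp
  have hflp : ∀ t t' (a : t ⟶ t'), f.map (mm t t' a).2
      = eqToHom (hfo t) ≫ p.map a ≫ eqToHom (hwp t t' a).symm := by
    intro t t' a
    obtain ⟨e1, e2⟩ := (sigma_hom_ext _ _).mp (hfw t t' a)
    have e2' : f.map (mm t t' a).2 ≫ eqToHom (hwp t t' a) = eqToHom (hfo t) ≫ p.map a := by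
      convert e2
    rw [← Category.assoc, ← e2']; simp
  refine ⟨{ obj := mo
            map := fun {t t'} a => (mm t t' a).2 ≫ eqToHom (hwo t t' a)
            map_id := ?_
            map_comp := ?_ }, ⟨?_, ?_⟩, ?_⟩
  · -- map_id
    intro t
    have huniq := mmuniq t t (𝟙 t) ⟨mo t, 𝟙 (mo t)⟩ (by
      apply (sigma_hom_ext _ _).mpr
      exact ⟨hho t, by simp⟩)
    obtain ⟨e1, e2⟩ := (sigma_hom_ext (mm t t (𝟙 t)) (𝟙 (mo t))).mp huniq.symm
    convert e2
  · -- map_comp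
    intro t t' t'' a b
    have huniq := mmuniq t t'' (a ≫ b)
      ⟨(mm t' t'' b).1, (mm t t' a).2 ≫ eqToHom (hwo t t' a) ≫ (mm t' t'' b).2⟩ (by
      apply (sigma_hom_ext _ _).mpr
      refine ⟨hwq t' t'' b, ?_⟩
      simp [hmlp, eqToHom_map])
    obtain ⟨e1, e2⟩ := (sigma_hom_ext (mm t t'' (a ≫ b)) _).mp huniq.symm
    have e2' : (mm t t'' (a ≫ b)).2 ≫ eqToHom (hwo t t'' (a ≫ b) |>.trans (hwo t' t'' b).symm)
        = (mm t t' a).2 ≫ eqToHom (hwo t t' a) ≫ (mm t' t'' b).2 := by convert e2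
    rw [← Category.assoc ((mm t t' a).2)] at e2'
    have := congrArg (fun u => u ≫ eqToHom (hwo t' t'' b)) e2'
    simpa using this
  · -- m ⋙ f = p
    refine CategoryTheory.Functor.ext (fun t => hfo t) fun t t' a => ?_
    simp [hflp, eqToHom_map]
  · -- m ⋙ h = q
    refine CategoryTheory.Functor.ext (fun t => hho t) fun t t' a => ?_
    simp [hmlp, eqToHom_map]
  · -- uniqueness
    intro m' ⟨c1, c2⟩
    have ob : ∀ t, m'.obj t = mo t := by
      intro t
      apply hf.1
      rw [hfo t]
      exact Functor.congr_obj c1 t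
    refine CategoryTheory.Functor.ext ob fun t t' a => ?_
    have hq2 : h.obj (m'.obj t') = q.obj t' := Functor.congr_obj c2 t'
    have huniq := mmuniq t t' a ⟨m'.obj t', eqToHom (ob t).symm ≫ m'.map a⟩ (by
      apply (sigma_hom_ext _ _).mpr
      refine ⟨hq2, ?_⟩
      have hcg := Functor.congr_hom c2 a
      simp only [Functor.comp_map] at hcg
      simp [eqToHom_map, hcg])
    obtain ⟨e1, e2⟩ := (sigma_hom_ext _ (mm t t' a).2).mp huniq
    dsimp at e1 e2 ⊢
    rw [← e2]
    simp
end
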